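/- arXiv:2603.09252 — 4 statements merged into one kernel-verified Lean document; each statement's English description precedes it below -/
import Mathlib

section
/- Let K be a field of characteristic 0 and let K((s)) be the field of formal Laurent series. The image of the logarithmic derivative map u ↦ s·u'/u on K((s))^× is exactly ℤ + s·K[[s]], i.e.: (1) for every unit u ∈ K((s))^×, s·u'/u = n + s·f(s) for some integer n (the order of u) and some f ∈ K[[s]]; and (2) conversely, for every n ∈ ℤ and f ∈ K[[s]] there exists u ∈ K((s))^× with s·u'/u = n + s·f(s). -/
open LaurentSeries

/-- The formal derivative of a Laurent series: `(∑ aₙ sⁿ)' = ∑ (n+1)·aₙ₊₁ sⁿ`. -/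
noncomputable def lsDeriv (K : Type*) [Field K] (u : LaurentSeries K) : LaurentSeries K where
  coeff := fun n => (n + 1 : ℤ) • u.coeff (n + 1)
  isPWO_support' := by
    have hsub : Function.support (fun n : ℤ => ((n + 1 : ℤ) • u.coeff (n + 1) : K)) ⊆
        (fun m : ℤ => m - 1) '' Function.support u.coeff := by
      intro n hn
      have h1 : u.coeff (n + 1) ≠ 0 := by
        intro h
        exact hn (by simp [Function.mem_support, h])
      exact ⟨n + 1, h1, by ring⟩
    exact ((u.isPWO_support').image_of_monotone
      (f := fun m : ℤ => m - 1) (fun a b hab => by simpa using hab)).mono hsub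

/-! The Euler operator `θ = s·d/ds` multiplies the coefficient of `sᵏ` by `k`, so
`θ (sⁿ v) = sⁿ (n v + θ v)` and, for a power series `v`, `θ v = s v'`. Writing a nonzero `u` as
`sⁿ v` with `v` a unit of `K[[s]]` gives `θ u / u = n + s·(v'/v)`. Conversely, for given `n` and
`f`, `u = sⁿ v` works as soon as `v' = f v`, `v(0) = 1`; this equation is solved coefficient by
coefficient, dividing by `m + 1` at step `m`, which is where characteristic zero is needed. -/

open HahnSeries

section EulerOperator

variable {K : Type*} [Field K]

theorem coeff_single_one_mul_lsDeriv (u : LaurentSeries K) (k : ℤ) :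
    (single (1 : ℤ) (1 : K) * lsDeriv K u).coeff k = k • u.coeff k := by
  obtain ⟨m, rfl⟩ : ∃ m, k = m + 1 := ⟨k - 1, by ring⟩
  rw [coeff_single_mul_add, one_mul]
  rfl

theorem single_one_mul_lsDeriv_single_mul (n : ℤ) (w : LaurentSeries K) :
    single (1 : ℤ) (1 : K) * lsDeriv K (single n 1 * w) =
      n • (single n 1 * w) + single n 1 * (single (1 : ℤ) (1 : K) * lsDeriv K w) := by
  ext k
  obtain ⟨m, rfl⟩ : ∃ m, k = m + n := ⟨k - n, by ring⟩
  simp only [coeff_add, coeff_smul, coeff_single_one_mul_lsDeriv, coeff_single_mul_add, one_mul]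
  rw [add_comm m n, add_smul]

theorem single_one_mul_lsDeriv_ofPowerSeries (v : PowerSeries K) :
    single (1 : ℤ) (1 : K) * lsDeriv K (ofPowerSeries ℤ K v) =
      single (1 : ℤ) (1 : K) * ofPowerSeries ℤ K (PowerSeries.derivative K v) := by
  ext k
  obtain ⟨m, rfl⟩ : ∃ m, k = m + 1 := ⟨k - 1, by ring⟩
  rw [coeff_single_one_mul_lsDeriv, coeff_single_mul_add, one_mul]
  rcases lt_or_ge m 0 with hm | hm
  · obtain hm' | hm' : m + 1 = 0 ∨ m + 1 < 0 := by omega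
    · rw [hm', zero_smul, PowerSeries.coeff_coe, if_pos hm]
    · rw [PowerSeries.coeff_coe, PowerSeries.coeff_coe, if_pos hm, if_pos hm', smul_zero]
  · lift m to ℕ using hm
    rw [← Nat.cast_succ, coeff_coe_powerSeries,
      coeff_coe_powerSeries, PowerSeries.coeff_derivative, zsmul_eq_mul]
    push_cast
    ring

theorem single_one_mul_lsDeriv_eq_of_derivative_eq_mul (n : ℤ) {f v : PowerSeries K}
    (h : PowerSeries.derivative K v = f * v) :
    single (1 : ℤ) (1 : K) * lsDeriv K (single n 1 * ofPowerSeries ℤ K v) =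
      ((n : LaurentSeries K) + single (1 : ℤ) (1 : K) * ofPowerSeries ℤ K f) *
        (single n 1 * ofPowerSeries ℤ K v) := by
  rw [single_one_mul_lsDeriv_single_mul, single_one_mul_lsDeriv_ofPowerSeries, h, map_mul,
    zsmul_eq_mul]
  ring

end EulerOperator

namespace PowerSeries

variable {K : Type*} [Field K]

/-- The coefficients of `exp (∫ f)`. -/
noncomputable def expIntegralCoeff (f : PowerSeries K) : ℕ → K
  | 0 => 1
  | m + 1 => ((m : K) + 1)⁻¹ *
      ∑ j ∈ Finset.range (m + 1), coeff j f * expIntegralCoeff f (m - j)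
  decreasing_by omega

theorem exists_derivative_eq_mul [CharZero K] (f : PowerSeries K) :
    ∃ v : PowerSeries K, constantCoeff v = 1 ∧ d⁄dX K v = f * v := by
  refine ⟨mk (expIntegralCoeff f), by simp [expIntegralCoeff], ?_⟩
  ext m
  rw [coeff_derivative, coeff_mk, expIntegralCoeff, mul_comm, ← mul_assoc,
    mul_inv_cancel₀ (Nat.cast_add_one_ne_zero m), one_mul, coeff_mul,
    Finset.Nat.sum_antidiagonal_eq_sum_range_succ_mk]
  simp only [coeff_mk]

end PowerSeries

/-- Over a field `K` of characteristic zero, the image of the logarithmic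
derivative `u ↦ s·u'/u` on `K((s))ˣ` is exactly `ℤ + s·K[[s]]`: (1) for every nonzero Laurent
series `u` there are `n : ℤ` and `f ∈ K[[s]]` with `s·u' = (n + s·f)·u`; (2) conversely every
`n + s·f` arises this way. -/
theorem log_derivative_image (K : Type*) [Field K] [CharZero K] :
    (∀ u : LaurentSeries K, u ≠ 0 → ∃ (n : ℤ) (f : PowerSeries K),
        HahnSeries.single (1 : ℤ) (1 : K) * lsDeriv K u =
          ((n : LaurentSeries K) +
              HahnSeries.single (1 : ℤ) (1 : K) * HahnSeries.ofPowerSeries ℤ K f) * u) ∧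
      (∀ (n : ℤ) (f : PowerSeries K), ∃ u : LaurentSeries K, u ≠ 0 ∧
        HahnSeries.single (1 : ℤ) (1 : K) * lsDeriv K u =
          ((n : LaurentSeries K) +
              HahnSeries.single (1 : ℤ) (1 : K) * HahnSeries.ofPowerSeries ℤ K f) * u) := by
  refine ⟨fun u hu => ?_, fun n f => ?_⟩
  · set v := u.powerSeriesPart
    have hv : PowerSeries.constantCoeff v ≠ 0 := by
      simpa [v, ← PowerSeries.coeff_zero_eq_constantCoeff] using coeff_order_eq_zero.not.2 hu
    set dv := PowerSeries.derivative K v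
    have hdv : dv = dv * v⁻¹ * v := by rw [mul_assoc, PowerSeries.inv_mul_cancel v hv, mul_one]
    refine ⟨u.order, dv * v⁻¹, ?_⟩
    have := single_one_mul_lsDeriv_eq_of_derivative_eq_mul u.order hdv
    rwa [single_order_mul_powerSeriesPart] at this
  · obtain ⟨v, hv₀, hv⟩ := PowerSeries.exists_derivative_eq_mul f
    have hv_ne : ofPowerSeries ℤ K v ≠ 0 :=
      (map_ne_zero_iff _ ofPowerSeries_injective).2 fun h => by simp [h] at hv₀
    exact ⟨_, mul_ne_zero (single_ne_zero one_ne_zero) hv_ne,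
      single_one_mul_lsDeriv_eq_of_derivative_eq_mul n hv⟩
end

section
/- Let p be a prime. Let 1 → Z → L →^π Δ → 1 be an extension of finite groups with Z central in L and |Z| coprime to p. Let K ≤ Δ be an abelian p-subgroup with preimage K̂ = π^{-1}(K), and suppose the centralizer C_L(K̂) has order coprime to p. Then K is trivial. -/
/-- Let `1 → Z → L →π Δ → 1` be a central extension of finite groups with
`|Z|` coprime to the prime `p`.  Let `K ≤ Δ` be an abelian `p`-subgroup such that the
centralizer `C_L(K̂)` of `K̂ = π⁻¹(K)` has order coprime to `p`.  Then `K` is trivial. -/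
theorem abelian_p_subgroup_trivial (p : ℕ) (hp : p.Prime) (L Δ : Type*) [Group L] [Group Δ]
    [Finite L] [Finite Δ] (π : L →* Δ) (hsurj : Function.Surjective π)
    (hcentral : ∀ z ∈ π.ker, ∀ l : L, z * l = l * z)
    (hZ : Nat.Coprime (Nat.card π.ker) p)
    (K : Subgroup Δ) (hKab : ∀ a ∈ K, ∀ b ∈ K, a * b = b * a) (hKp : IsPGroup p K)
    (hC : Nat.Coprime (Nat.card (Subgroup.centralizer ((K.comap π : Subgroup L) : Set L))) p) :
    K = ⊥ := by
  rw [Subgroup.eq_bot_iff_forall]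
  intro k hk
  obtain ⟨x, rfl⟩ := hsurj k
  set n := orderOf x with hn
  have hn0 : n ≠ 0 := (orderOf_pos x).ne'
  set b := n.factorization p with hb
  set m := n / p ^ b with hm
  have hmn : p ^ b * m = n := Nat.ordProj_mul_ordCompl_eq_self n p
  have hmp : Nat.Coprime p m := Nat.coprime_ordCompl hp hn0
  set y := x ^ m with hy
  have hyb : y ^ p ^ b = 1 := by
    rw [hy, ← pow_mul, mul_comm, hmn]
    exact pow_orderOf_eq_one x
  have hyK : π y ∈ K := by
    rw [hy, map_pow]; exact K.pow_mem hk m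
  -- y centralizes K̂
  have hyc : y ∈ Subgroup.centralizer ((K.comap π : Subgroup L) : Set L) := by
    rw [Subgroup.mem_centralizer_iff]
    intro w hw
    have hwK : π w ∈ K := hw
    set z := y * w * y⁻¹ * w⁻¹ with hz
    have hzker : z ∈ π.ker := by
      have hcomm : π y * π w = π w * π y := hKab _ hyK _ hwK
      simp only [MonoidHom.mem_ker, hz, map_mul, map_inv]
      rw [hcomm]; group
    have hzc : ∀ l : L, z * l = l * z := hcentral z hzker
    have key : ∀ j : ℕ, y ^ j * w = z ^ j * w * y ^ j := by
      intro j
      induction j with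
      | zero => simp
      | succ j ih =>
        have h1 : y * w = z * w * y := by rw [hz]; group
        have hcy : Commute z y := hzc y
        have hcyj : z ^ j * y = y * z ^ j := (hcy.pow_left j).eq
        calc y ^ (j + 1) * w = y * (y ^ j * w) := by rw [pow_succ', mul_assoc]
          _ = y * (z ^ j * w * y ^ j) := by rw [ih]
          _ = y * z ^ j * (w * y ^ j) := by group
          _ = z ^ j * y * (w * y ^ j) := by rw [← hcyj]
          _ = z ^ j * (y * w) * y ^ j := by group
          _ = z ^ j * (z * w * y) * y ^ j := by rw [h1]
          _ = z ^ (j + 1) * w * y ^ (j + 1) := by rw [pow_succ, pow_succ']; group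
    have hzpb : z ^ p ^ b = 1 := by
      have := key (p ^ b)
      rw [hyb, one_mul, mul_one] at this
      have h2 : z ^ p ^ b * w = 1 * w := by rw [one_mul]; exact this.symm
      exact mul_right_cancel h2
    have hzo : orderOf z ∣ p ^ b := orderOf_dvd_of_pow_eq_one hzpb
    have hzcard : orderOf z ∣ Nat.card π.ker := by
      have := orderOf_dvd_natCard (⟨z, hzker⟩ : π.ker)
      rwa [Subgroup.orderOf_mk] at this
    have hzcop : Nat.Coprime (orderOf z) (p ^ b) :=
      ((Nat.Coprime.coprime_dvd_left hzcard hZ)).pow_right b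
    have : orderOf z = 1 := hzcop.eq_one_of_dvd hzo
    have hz1 : z = 1 := orderOf_eq_one_iff.mp this
    have : y * w * y⁻¹ * w⁻¹ = 1 := hz1
    calc w * y = (y * w * y⁻¹ * w⁻¹) * (w * y) := by rw [this]; group
      _ = y * w := by group
  -- y has order dividing p ^ b and order coprime to p, hence y = 1
  have hyo : orderOf y ∣ p ^ b := orderOf_dvd_of_pow_eq_one hyb
  have hycard : orderOf y ∣ Nat.card (Subgroup.centralizer ((K.comap π : Subgroup L) : Set L)) := by
    have := orderOf_dvd_natCard (⟨y, hyc⟩ : Subgroup.centralizer ((K.comap π : Subgroup L) : Set L))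
    rwa [Subgroup.orderOf_mk] at this
  have hycop : Nat.Coprime (orderOf y) (p ^ b) :=
    ((Nat.Coprime.coprime_dvd_left hycard hC)).pow_right b
  have hy1 : y = 1 := orderOf_eq_one_iff.mp (hycop.eq_one_of_dvd hyo)
  -- hence (π x) ^ m = 1, so orderOf (π x) divides m, which is coprime to p
  have hkm : (π x) ^ m = 1 := by rw [← map_pow, ← hy, hy1, map_one]
  have hkdvd : orderOf (π x) ∣ m := orderOf_dvd_of_pow_eq_one hkm
  obtain ⟨c, hc⟩ := hKp ⟨π x, hk⟩
  have hcc : (π x) ^ p ^ c = 1 := by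
    have := congrArg (Subtype.val) hc
    simpa using this
  have hkp2 : orderOf (π x) ∣ p ^ c := orderOf_dvd_of_pow_eq_one hcc
  have hkcop : Nat.Coprime (orderOf (π x)) (p ^ c) :=
    ((Nat.Coprime.coprime_dvd_left hkdvd hmp.symm)).pow_right c
  exact orderOf_eq_one_iff.mp (hkcop.eq_one_of_dvd hkp2)
end

section
/- Let G be a finite group acting on a finite abelian group A, and suppose there exists a central element σ ∈ Z(G) such that the fixed subgroup A^σ = {a ∈ A : σ·a = a} is trivial. Then every extension of G by A realizing this action splits; equivalently, the second group cohomology H²(G, A) vanishes. -/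
/-!
Since `σ` is central, conjugation by `σ` acts trivially on `H²(G, A)`, while it also acts through
the coefficients by `ρ σ`. On cocycles this says that `(ρ σ - 1) ∘ f` is the coboundary of
`g ↦ f (σ, g) - f (g, σ)`. If `A` is finite without nonzero `σ`-fixed points, `ρ σ - 1` is
invertible and commutes with the action, so every cocycle `f` is `ρ σ - 1` applied to the cocycle
`(ρ σ - 1)⁻¹ ∘ f`, hence a coboundary.
-/

universe u

namespace groupCohomology

variable {k G : Type u} [CommRing k] [Group G] {A : Rep k G}

lemma comp_mem_cocycles₂ {ψ : Module.End k A} (hψ : ∀ g, Commute ψ (A.ρ g))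
    {f : G × G → A} (hf : f ∈ cocycles₂ A) : ⇑ψ ∘ f ∈ cocycles₂ A := by
  rw [mem_cocycles₂_iff] at hf ⊢
  intro g h j
  simp only [Function.comp_apply]
  rw [← map_add, hf, map_add, ← Module.End.mul_apply, (hψ g).eq, Module.End.mul_apply]

lemma ρ_sub_one_comp_mem_coboundaries₂ {σ : G} (hσ : σ ∈ Subgroup.center G)
    {f : G × G → A} (hf : f ∈ cocycles₂ A) : ⇑(A.ρ σ - 1) ∘ f ∈ coboundaries₂ A := by
  rw [mem_cocycles₂_iff] at hf
  refine ⟨fun g => f (σ, g) - f (g, σ), funext fun ⟨g, h⟩ => ?_⟩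
  have e₁ := hf σ g h
  have e₂ := hf g σ h
  have e₃ := hf g h σ
  rw [Subgroup.mem_center_iff.mp hσ g] at e₂
  rw [Subgroup.mem_center_iff.mp hσ h] at e₃
  simp only [d₁₂_hom_apply, map_sub, Function.comp_apply, LinearMap.sub_apply,
    Module.End.one_apply]
  linear_combination (norm := module) e₁ - e₂ + e₃

theorem subsingleton_H2_of_isUnit_ρ_sub_one {σ : G} (hσ : σ ∈ Subgroup.center G)
    (hunit : IsUnit (A.ρ σ - 1)) : Subsingleton (groupCohomology A 2) := by
  have hcomm : ∀ g, Commute (A.ρ σ - 1) (A.ρ g) := fun g =>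
    (Commute.map (Subgroup.mem_center_iff.mp hσ g) A.ρ).symm.sub_left (Commute.one_left _)
  obtain ⟨L, hL⟩ := hunit
  have hcomm_inv : ∀ g, Commute (↑L⁻¹ : Module.End k A) (A.ρ g) := fun g =>
    (hL ▸ hcomm g).units_inv_left
  have hbound (f : cocycles₂ A) : ⇑f ∈ coboundaries₂ A := by
    have h := ρ_sub_one_comp_mem_coboundaries₂ hσ (comp_mem_cocycles₂ hcomm_inv f.2)
    rwa [← hL, ← Function.comp_assoc, ← Module.End.coe_mul, L.mul_inv, Module.End.coe_one,
      Function.id_comp] at h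
  refine subsingleton_of_forall_eq 0 fun x => ?_
  induction x using H2_induction_on with
  | h f => exact (H2π_eq_zero_iff f).2 (hbound f)

lemma isUnit_ρ_sub_one_of_fixed_eq_zero [Finite A] {σ : G}
    (hfix : ∀ a : A, A.ρ σ a = a → a = 0) : IsUnit (A.ρ σ - 1) := by
  refine (Module.End.isUnit_iff _).2 (Finite.injective_iff_bijective.1 ?_)
  rw [injective_iff_map_eq_zero]
  exact fun a ha => hfix a (sub_eq_zero.1 ha)

end groupCohomology

theorem h2_vanishes_of_central_fixed_point_free_general (G : Type) [Group G]
    (A : Rep ℤ G) [Finite A] (σ : G) (hσ : σ ∈ Subgroup.center G)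
    (hfix : ∀ a : A, A.ρ σ a = a → a = 0) :
    Subsingleton (groupCohomology A 2) :=
  groupCohomology.subsingleton_H2_of_isUnit_ρ_sub_one hσ
    (groupCohomology.isUnit_ρ_sub_one_of_fixed_eq_zero hfix)

/-- Let `G` be a finite group acting on a finite abelian group `A` (a
representation `A : Rep ℤ G`), and suppose there is a central element `σ ∈ Z(G)` whose fixed
subgroup `A^σ` is trivial.  Then the second group cohomology `H²(G, A)` vanishes (equivalently,
every extension of `G` by `A` realizing this action splits). -/
theorem h2_vanishes_of_central_fixed_point_free (G : Type) [Group G] [Finite G]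
    (A : Rep ℤ G) [Finite A] (σ : G) (hσ : σ ∈ Subgroup.center G)
    (hfix : ∀ a : A, A.ρ σ a = a → a = 0) :
    Subsingleton (groupCohomology A 2) :=
  h2_vanishes_of_central_fixed_point_free_general G A σ hσ hfix
end

section
/- Let p be an odd prime, let K = ℚ_p(μ_p) be the field obtained by adjoining the p-th roots of unity, with ring of integers O and maximal ideal 𝔪, and let π ∈ K satisfy π^(p-1) = -p. Then every p-th root of unity ζ ∈ K satisfies (ζ - 1)/π ∈ O, and the map ζ ↦ ((ζ - 1)/π mod 𝔪) is a bijection from the group μ_p of p-th roots of unity in K onto the prime field 𝔽_p ⊆ O/𝔪. -/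
/-!
Put `x = ζ - 1`. The binomial theorem gives `x ^ (p - 1) = -p * (1 + x * w)` with `w`
integral, so `t = x / π` satisfies `t ^ (p - 1) ≡ 1` modulo `𝔪`: `t` is a unit and `t ^ p ≡ t`.
Since `∏_{c < p} (X - c) ≡ X ^ p - X` modulo `p`, such a `t` is congruent to some `c < p`.
Two distinct roots satisfy `(ζ - 1) / π - (ζ' - 1) / π = ζ' * (ζ / ζ' - 1) / π`, a unit, so
the map `μ_p → 𝔽_p` is injective, hence bijective as both sides have `p` elements.
-/
open Polynomial Finset

theorem FiniteField.prod_univ_X_sub_C (K : Type*) [Field K] [Fintype K] :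
    ∏ a : K, (X - C a) = X ^ Fintype.card K - X := by
  have hmonic : (X ^ Fintype.card K - X : K[X]).Monic :=
    (monic_X_pow _).sub_of_left (by
      rw [degree_X, degree_X_pow]; exact_mod_cast Fintype.one_lt_card)
  have := prod_multiset_X_sub_C_of_monic_of_roots_card_eq hmonic (by
    rw [roots_X_pow_card_sub_X, FiniteField.X_pow_card_sub_X_natDegree_eq _ Fintype.one_lt_card]
    rfl)
  rwa [roots_X_pow_card_sub_X] at this

theorem exists_prod_sub_val_eq (p : ℕ) [Fact p.Prime] {R : Type*} [CommRing R] (x : R) :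
    ∃ y : R, ∏ a : ZMod p, (x - (a.val : R)) = x ^ p - x + p * y := by
  have hker : Ideal.span {C (p : ℤ)} = RingHom.ker (mapRingHom (Int.castRingHom (ZMod p))) := by
    rw [ker_mapRingHom, ZMod.ker_intCastRingHom, Ideal.map_span, Set.image_singleton]
  obtain ⟨Q, hQ⟩ : C (p : ℤ) ∣ ∏ a : ZMod p, (X - C (a.val : ℤ)) - (X ^ p - X) := by
    rw [← Ideal.mem_span_singleton, hker, RingHom.mem_ker, coe_mapRingHom]
    simp only [Polynomial.map_sub, Polynomial.map_prod, map_X, map_C, Polynomial.map_pow,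
      Int.coe_castRingHom, Int.cast_natCast, ZMod.natCast_zmod_val,
      FiniteField.prod_univ_X_sub_C, ZMod.card, sub_self]
  refine ⟨aeval x Q, ?_⟩
  have := congrArg (aeval x) hQ
  simp only [map_sub, map_prod, map_pow, aeval_X, aeval_C, map_mul] at this
  push_cast at this
  linear_combination this

theorem exists_add_one_pow_prime_eq {R : Type*} [CommRing R] {p : ℕ} (hp : p.Prime) (x : R) :
    ∃ w : R, (x + 1) ^ p = x ^ p + 1 + p * x * (1 + x * w) := by
  refine ⟨∑ k ∈ Ico 2 p, x ^ (k - 2) * ((p.choose k / p : ℕ) : R), ?_⟩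
  rw [add_pow_prime_eq hp, ← Ico_add_one_left_eq_Ioo, zero_add,
    sum_eq_sum_Ico_succ_bot hp.one_lt, mul_sum]
  simp only [one_pow, mul_one, Nat.choose_one_right, Nat.div_self hp.pos, Nat.sub_self,
    pow_zero, Nat.cast_one, Nat.reduceAdd]
  congr 3
  refine sum_congr rfl fun k hk => ?_
  obtain ⟨j, rfl⟩ := Nat.exists_eq_add_of_le (mem_Ico.mp hk).1
  simp only [Nat.add_sub_cancel_left, show 2 + j - 1 = j + 1 by omega, pow_succ']
  ring

namespace Valuation

variable {K : Type*} [Field K] {Γ₀ : Type*} [LinearOrderedCommGroupWithZero Γ₀]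
  (v : Valuation K Γ₀)

theorem map_eq_one_of_pow_eq_one {n : ℕ} (hn : n ≠ 0) {ζ : K} (hζ : ζ ^ n = 1) : v ζ = 1 :=
  (pow_eq_one_iff_left hn).mp (by rw [← map_pow, hζ, map_one])

theorem exists_natCast_sub_lt_one_of_pow_sub_lt_one {p : ℕ} (hp : p.Prime) (hvp : v p < 1)
    {t : K} (ht : v t ≤ 1) (h : v (t ^ p - t) < 1) : ∃ c < p, v (t - c) < 1 := by
  have := Fact.mk hp
  obtain ⟨y, hy⟩ := exists_prod_sub_val_eq p (⟨t, ht⟩ : v.integer)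
  have hprod : v (∏ a : ZMod p, (t - (a.val : K))) < 1 := by
    have := congrArg Subtype.val hy
    push_cast at this
    rw [this]
    exact v.map_add_lt h (by rw [map_mul]; exact mul_lt_one_of_lt_of_le hvp y.2)
  by_contra! hcon
  refine hprod.not_ge ?_
  rw [map_prod]
  exact one_le_prod' fun a _ => hcon _ (ZMod.val_lt a)

section RootsOfUnity

variable {p : ℕ} (hp : p.Prime) (hvp : v p < 1) (hp0 : (p : K) ≠ 0) {π : K}
  (hπ : π ^ (p - 1) = -p)
include hp hvp hp0 hπ

theorem map_sub_one_div_pow_pred_sub_one_lt_one {ζ : K} (hζ : ζ ^ p = 1) (hζ1 : ζ ≠ 1) :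
    v (((ζ - 1) / π) ^ (p - 1) - 1) < 1 := by
  set x := ζ - 1 with hx
  have hx0 : x ≠ 0 := sub_ne_zero.mpr hζ1
  have hxint : x ∈ v.integer :=
    Subring.sub_mem _ (v.map_eq_one_of_pow_eq_one hp.ne_zero hζ).le (Subring.one_mem _)
  obtain ⟨w, hw⟩ := exists_add_one_pow_prime_eq hp (⟨x, hxint⟩ : v.integer)
  have hxw : x ^ (p - 1) = -p * (1 + x * w) := by
    have := congrArg Subtype.val hw
    push_cast at this
    rw [hx, sub_add_cancel, hζ] at this
    refine mul_left_cancel₀ hx0 ?_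
    rw [← pow_succ', Nat.sub_add_cancel hp.one_le]
    linear_combination -this
  have hvx : v x < 1 := by
    have hw1 : v (1 + x * w) ≤ 1 :=
      Subring.add_mem _ (Subring.one_mem _) (Subring.mul_mem _ hxint w.2)
    refine (pow_lt_one_iff (Nat.sub_ne_zero_of_lt hp.one_lt)).mp ?_
    rw [← map_pow, hxw, map_mul, v.map_neg]
    exact mul_lt_one_of_lt_of_le hvp hw1
  have ht : (x / π) ^ (p - 1) - 1 = x * w := by
    rw [div_pow, hxw, hπ]
    field_simp
    ring
  rw [ht, map_mul]
  exact mul_lt_one_of_lt_of_le hvx w.2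

theorem map_sub_one_div_eq_one {ζ : K} (hζ : ζ ^ p = 1) (hζ1 : ζ ≠ 1) :
    v ((ζ - 1) / π) = 1 := by
  have h := v.map_eq_of_sub_lt (x := 1)
    (by rw [v.map_one]; exact v.map_sub_one_div_pow_pred_sub_one_lt_one hp hvp hp0 hπ hζ hζ1)
  rw [map_pow, v.map_one] at h
  exact (pow_eq_one_iff_left (Nat.sub_ne_zero_of_lt hp.one_lt)).mp h

theorem map_sub_one_div_le_one {ζ : K} (hζ : ζ ^ p = 1) : v ((ζ - 1) / π) ≤ 1 := by
  rcases eq_or_ne ζ 1 with rfl | hζ1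
  · simp
  · exact (v.map_sub_one_div_eq_one hp hvp hp0 hπ hζ hζ1).le

theorem map_sub_one_div_pow_sub_lt_one {ζ : K} (hζ : ζ ^ p = 1) :
    v (((ζ - 1) / π) ^ p - (ζ - 1) / π) < 1 := by
  rcases eq_or_ne ζ 1 with rfl | hζ1
  · simp [zero_pow hp.ne_zero]
  · set t := (ζ - 1) / π
    have : t ^ p - t = t * (t ^ (p - 1) - 1) := by
      rw [mul_sub, ← pow_succ', Nat.sub_add_cancel hp.one_le, mul_one]
    rw [this, map_mul, v.map_sub_one_div_eq_one hp hvp hp0 hπ hζ hζ1, one_mul]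
    exact v.map_sub_one_div_pow_pred_sub_one_lt_one hp hvp hp0 hπ hζ hζ1

theorem map_sub_one_div_sub_sub_one_div_eq_one {ζ ζ' : K} (hζ : ζ ^ p = 1) (hζ' : ζ' ^ p = 1)
    (hne : ζ ≠ ζ') : v ((ζ - 1) / π - (ζ' - 1) / π) = 1 := by
  have hζ'0 : ζ' ≠ 0 := by rintro rfl; simp [zero_pow hp.ne_zero] at hζ'
  have : (ζ - 1) / π - (ζ' - 1) / π = ζ' * ((ζ / ζ' - 1) / π) := by
    field_simp
    ring
  rw [this, map_mul, v.map_eq_one_of_pow_eq_one hp.ne_zero hζ', one_mul]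
  exact v.map_sub_one_div_eq_one hp hvp hp0 hπ (by rw [div_pow, hζ, hζ', div_one])
    (mt (div_eq_one_iff_eq hζ'0).mp hne)

end RootsOfUnity

end Valuation

theorem Finset.exists_mem_rel_of_injective {α : Type*} {s : Finset α} {n : ℕ} (hs : n ≤ #s)
    (r : α → ℕ → Prop) (hr : ∀ a ∈ s, ∃ c < n, r a c)
    (hinj : ∀ a ∈ s, ∀ b ∈ s, ∀ c, r a c → r b c → a = b) :
    ∀ c < n, ∃ a ∈ s, r a c := by
  choose f hfn hrf using hr
  intro c hc
  obtain ⟨a, ha, rfl⟩ := surj_on_of_inj_on_of_card_le (t := range n) f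
    (fun a ha => mem_range.mpr (hfn a ha))
    (fun a b ha hb hab => hinj a ha b hb _ (hrf a ha) (hab ▸ hrf b hb)) (by simpa using hs)
    c (mem_range.mpr hc)
  exact ⟨a, ha, hrf a ha⟩

theorem dwork_residue_bijection_general (p : ℕ) (hp : p.Prime)
    (K : Type*) [Field K] (v : Valuation K NNReal)
    (hvp : v (p : K) = (p : NNReal)⁻¹)
    (hroots : ∃ ζ : K, ζ ^ p = 1 ∧ ζ ≠ 1)
    (π : K) (hπ : π ^ (p - 1) = -(p : K)) :
    (∀ ζ : K, ζ ^ p = 1 → v ((ζ - 1) / π) ≤ 1) ∧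
      (∀ ζ : K, ζ ^ p = 1 → ∃ c : ℕ, c < p ∧ v ((ζ - 1) / π - (c : K)) < 1) ∧
      (∀ ζ ζ' : K, ζ ^ p = 1 → ζ' ^ p = 1 →
        v ((ζ - 1) / π - (ζ' - 1) / π) < 1 → ζ = ζ') ∧
      (∀ c : ℕ, c < p → ∃ ζ : K, ζ ^ p = 1 ∧ v ((ζ - 1) / π - (c : K)) < 1) := by
  have := Fact.mk hp
  have hp1 : v p < 1 := hvp ▸ inv_lt_one_of_one_lt₀ (by exact_mod_cast hp.one_lt)
  have hp0 : (p : K) ≠ 0 := v.ne_zero_iff.mp (hvp ▸ inv_ne_zero (by exact_mod_cast hp.ne_zero))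
  have hle := fun ζ (hζ : ζ ^ p = 1) => v.map_sub_one_div_le_one hp hp1 hp0 hπ hζ
  have hres := fun ζ (hζ : ζ ^ p = 1) => v.exists_natCast_sub_lt_one_of_pow_sub_lt_one hp hp1
    (hle ζ hζ) (v.map_sub_one_div_pow_sub_lt_one hp hp1 hp0 hπ hζ)
  have hinj : ∀ ζ ζ' : K, ζ ^ p = 1 → ζ' ^ p = 1 →
      v ((ζ - 1) / π - (ζ' - 1) / π) < 1 → ζ = ζ' := fun ζ ζ' hζ hζ' h => by
    by_contra hne
    exact h.ne (v.map_sub_one_div_sub_sub_one_div_eq_one hp hp1 hp0 hπ hζ hζ' hne)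
  refine ⟨hle, hres, hinj, ?_⟩
  obtain ⟨ζ₀, hζ₀, hζ₀1⟩ := hroots
  have hcard : #(nthRootsFinset p (1 : K)) = p :=
    (IsPrimitiveRoot.iff_orderOf.mpr (orderOf_eq_prime hζ₀ hζ₀1)).card_nthRootsFinset
  have hmem : ∀ ζ, ζ ∈ nthRootsFinset p (1 : K) ↔ ζ ^ p = 1 :=
    fun ζ => mem_nthRootsFinset hp.pos 1
  intro c hc
  obtain ⟨ζ, hζ, hζc⟩ := exists_mem_rel_of_injective hcard.ge
    (fun ζ c => v ((ζ - 1) / π - (c : K)) < 1) (fun ζ hζ => hres ζ ((hmem ζ).mp hζ))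
    (fun ζ hζ ζ' hζ' c h h' => hinj ζ ζ' ((hmem ζ).mp hζ) ((hmem ζ').mp hζ')
      (sub_sub_sub_cancel_right _ _ (c : K) ▸ v.map_sub_lt h h')) c hc
  exact ⟨ζ, (hmem ζ).mp hζ, hζc⟩

/-- Let `p` be an odd prime and `K = ℚ_p(μ_p)` (a characteristic-zero field
carrying a multiplicative valuation `v` with `v p = 1/p`, containing a primitive `p`-th root of
unity) and `π ∈ K` with `π^(p-1) = -p`.  Then every `p`-th root of unity `ζ` satisfies
`(ζ - 1)/π ∈ O = {v ≤ 1}`, and `ζ ↦ ((ζ-1)/π mod 𝔪)` is a bijection from `μ_p` onto the prime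
field `𝔽_p = {0, 1, …, p-1 mod 𝔪} ⊆ O/𝔪` (injectivity and surjectivity being expressed via
the condition `v(x - y) < 1` of congruence modulo the maximal ideal `𝔪 = {v < 1}`). -/
theorem dwork_residue_bijection (p : ℕ) (hp : p.Prime) (hodd : Odd p)
    (K : Type*) [Field K] [CharZero K] (v : Valuation K NNReal)
    (hvp : v (p : K) = (p : NNReal)⁻¹)
    (hroots : ∃ ζ : K, ζ ^ p = 1 ∧ ζ ≠ 1)
    (π : K) (hπ : π ^ (p - 1) = -(p : K)) :
    (∀ ζ : K, ζ ^ p = 1 → v ((ζ - 1) / π) ≤ 1) ∧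
      (∀ ζ : K, ζ ^ p = 1 → ∃ c : ℕ, c < p ∧ v ((ζ - 1) / π - (c : K)) < 1) ∧
      (∀ ζ ζ' : K, ζ ^ p = 1 → ζ' ^ p = 1 →
        v ((ζ - 1) / π - (ζ' - 1) / π) < 1 → ζ = ζ') ∧
      (∀ c : ℕ, c < p → ∃ ζ : K, ζ ^ p = 1 ∧ v ((ζ - 1) / π - (c : K)) < 1) :=
  dwork_residue_bijection_general p hp K v hvp hroots π hπ
end
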